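/- For every natural number k and all 0 ≤ r, q ≤ k, the complex conjugate of p^k_{rq} equals p^k_{k−r,q}. -/
import Mathlib


/-- The coefficient `p^k_{rs}` expressing complex jet variables via real ones. -/
noncomputable def pcoef (k r s : ℕ) : ℂ :=
  (-1) ^ (k - r) *
    ((r.factorial * (k - r).factorial : ℂ) / ((2 : ℂ) ^ k * (s.factorial * (k - s).factorial))) *
    Complex.I ^ s *
    ∑ α ∈ Finset.Icc (k - r - s) (min (k - r) (k - s)),
      (-1) ^ α * ((k - s).choose α : ℂ) * ((s.choose (k - r - α)) : ℂ)

/-- Reflection identity for the inner sum, via the change of index `β = (k-q) - α`. -/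
lemma sum_reflect (k r q : ℕ) (hr : r ≤ k) (hq : q ≤ k) :
    ∑ α ∈ Finset.Icc (k-r-q) (min (k-r) (k-q)),
      (-1:ℂ)^α * ((k-q).choose α : ℂ) * ((q.choose (k-r-α)) : ℂ)
    = (-1:ℂ)^(k-q) * ∑ β ∈ Finset.Icc (r-q) (min r (k-q)),
      (-1:ℂ)^β * ((k-q).choose β : ℂ) * ((q.choose (r-β)) : ℂ) := by
  rw [Finset.mul_sum]
  refine Finset.sum_nbij' (fun α => k-q-α) (fun β => k-q-β) ?_ ?_ ?_ ?_ ?_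
  · intro a ha
    simp only [Finset.mem_Icc, le_min_iff] at *
    omega
  · intro b hb
    simp only [Finset.mem_Icc, le_min_iff] at *
    omega
  · intro a ha
    simp only [Finset.mem_Icc, le_min_iff] at ha
    omega
  · intro b hb
    simp only [Finset.mem_Icc, le_min_iff] at hb
    omega
  · intro a ha
    simp only [Finset.mem_Icc, le_min_iff] at ha
    have h1 : a ≤ k - q := by omega
    have h2 : k - r - a ≤ q := by omega
    have hs : (-1:ℂ)^(k-q) * (-1:ℂ)^(k-q-a) = (-1:ℂ)^a := by
      rw [← pow_add, show (k-q)+(k-q-a) = a + 2*(k-q-a) from by omega, pow_add,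
        pow_mul, neg_one_sq, one_pow, mul_one]
    rw [Nat.choose_symm h1, show r - (k-q-a) = q - (k-r-a) from by omega,
      Nat.choose_symm h2, ← hs]
    ring

/-- The symmetry property `conj(p^k_{rq}) = p^k_{k−r,q}`. -/
theorem pcoef_conj (k r q : ℕ) (hr : r ≤ k) (hq : q ≤ k) :
    (starRingEnd ℂ) (pcoef k r q) = pcoef k (k - r) q := by
  unfold pcoef
  rw [Nat.sub_sub_self hr]
  simp only [map_mul, map_div₀, map_pow, map_neg, map_one, map_sum, map_natCast, map_ofNat,
    Complex.conj_I]
  rw [sum_reflect k r q hr hq, neg_pow Complex.I q]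
  have hs : (-1:ℂ)^(k-r) * ((-1:ℂ)^q * (-1:ℂ)^(k-q)) = (-1:ℂ)^r := by
    rw [← pow_add, ← pow_add, show (k-r)+(q+(k-q)) = r+2*(k-r) from by omega, pow_add,
      pow_mul, neg_one_sq, one_pow, mul_one]
  rw [← hs]
  ring
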